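/- arXiv:2511.20466 — 2 statements merged into one kernel-verified Lean document; each statement's English description precedes it below -/
import Mathlib

section
/- Fix γ ∈ (0,1) and σ > 0. Define for x > 0 the quadratic forms ς²(x) = ∇F(x)ᵀ Σ ∇F(x) and ς²_{MLE}(x) = ∇F(x)ᵀ Σ^{MLE} ∇F(x), where ∇F(x) = (D_γ(x), D_σ(x)) with D_γ(x) = −(1 + γx/σ)^{−1/γ}( log(1 + γx/σ)/γ² − (x/(γσ))/(1 + γx/σ) ) and D_σ(x) = −(x/σ²)(1 + γx/σ)^{−1/γ−1}. Then the ratio ς²(x)/ς²_{MLE}(x) tends, as x → 0⁺, to 2( 8γ⁵ − 84γ⁴ + 374γ³ − 843γ² + 944γ − 423 ) / ( 3(γ−3)²(γ+1)(2γ−3)³ ); in particular this limit does not depend on σ. -/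
open Real Matrix Filter Topology

/-- Partial derivative of the GPD cdf `F_{γ,σ}(x)` with respect to the shape parameter γ. -/
noncomputable def Dgamma (γ σ x : ℝ) : ℝ :=
  -(1 + γ * x / σ) ^ (-1 / γ : ℝ) *
    (Real.log (1 + γ * x / σ) / γ ^ 2 - (x / (γ * σ)) / (1 + γ * x / σ))

/-- Partial derivative of the GPD cdf `F_{γ,σ}(x)` with respect to the scale parameter σ. -/
noncomputable def Dsigma (γ σ x : ℝ) : ℝ :=
  -(x / σ ^ 2) * (1 + γ * x / σ) ^ (-1 / γ - 1 : ℝ)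

/-- Asymptotic covariance matrix of the `L²` minimum distance estimator of `(γ,σ)`. -/
noncomputable def SigmaMDE (γ σ : ℝ) : Matrix (Fin 2) (Fin 2) ℝ :=
  !![4 * (γ - 2) ^ 4 * (γ * (γ * (2 * γ * (4 * γ ^ 2 - 58 * γ + 243) - 683) + 452) - 639) /
       (3 * (γ - 6) ^ 2 * (γ - 3) ^ 2 * (2 * γ - 3) ^ 3),
     4 * (γ - 2) ^ 2 * (γ * (γ * (2 * γ * (4 * γ ^ 2 - 50 * γ + 207) - 791) + 778) - 387) * σ /
       (3 * (γ - 6) * (γ - 3) ^ 2 * (2 * γ - 3) ^ 3);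
     4 * (γ - 2) ^ 2 * (γ * (γ * (2 * γ * (4 * γ ^ 2 - 50 * γ + 207) - 791) + 778) - 387) * σ /
       (3 * (γ - 6) * (γ - 3) ^ 2 * (2 * γ - 3) ^ 3),
     4 * (γ * (γ * (8 * γ ^ 3 - 84 * γ ^ 2 + 374 * γ - 843) + 944) - 423) * σ ^ 2 /
       (3 * (γ - 3) ^ 2 * (2 * γ - 3) ^ 3)]

/-- Asymptotic covariance matrix of the maximum likelihood estimator of `(γ,σ)`. -/
noncomputable def SigmaMLE (γ σ : ℝ) : Matrix (Fin 2) (Fin 2) ℝ :=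
  !![(γ + 1) ^ 2, -((γ + 1) * σ); -((γ + 1) * σ), 2 * (γ + 1) * σ ^ 2]

/-- Asymptotic variance of the MDE plug-in survival estimate,
`ς²(x) = ∇F(x)ᵀ Σ ∇F(x)`. -/
noncomputable def varMDE (γ σ x : ℝ) : ℝ :=
  ![Dgamma γ σ x, Dsigma γ σ x] ⬝ᵥ (SigmaMDE γ σ).mulVec ![Dgamma γ σ x, Dsigma γ σ x]

/-- Asymptotic variance of the MLE plug-in survival estimate,
`ς²_{MLE}(x) = ∇F(x)ᵀ Σ^{MLE} ∇F(x)`. -/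
noncomputable def varMLE (γ σ x : ℝ) : ℝ :=
  ![Dgamma γ σ x, Dsigma γ σ x] ⬝ᵥ (SigmaMLE γ σ).mulVec ![Dgamma γ σ x, Dsigma γ σ x]

/-! Both variances are quadratic forms in `∇F(x) = (D_γ(x), D_σ(x))`. With `y = γx/σ` one has
`D_γ/D_σ = (σ/γ)((1 + y) log(1 + y)/y - 1) → 0` as `x → 0⁺`, so both forms are dominated by their
`D_σ²` terms and the ratio tends to `Σ₂₂ / Σ^{MLE}₂₂`. -/

lemma Real.tendsto_log_one_add_div_self :
    Tendsto (fun y : ℝ => log (1 + y) / y) (𝓝[≠] 0) (𝓝 1) := by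
  simpa [div_eq_inv_mul] using hasDerivAt_iff_tendsto_slope_zero.mp (hasDerivAt_log one_ne_zero)

namespace Matrix

variable {R : Type*}

lemma dotProduct_mulVec_vec2 [CommRing R] (A : Matrix (Fin 2) (Fin 2) R) (u v : R) :
    ![u, v] ⬝ᵥ A *ᵥ ![u, v] = A 0 0 * u ^ 2 + (A 0 1 + A 1 0) * u * v + A 1 1 * v ^ 2 := by
  simp only [dotProduct, mulVec, Fin.sum_univ_two, cons_val_zero, cons_val_one]
  ring

lemma dotProduct_mulVec_vec2_eq_sq_mul [Field R] (A : Matrix (Fin 2) (Fin 2) R) (u : R) {v : R}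
    (hv : v ≠ 0) :
    ![u, v] ⬝ᵥ A *ᵥ ![u, v] = v ^ 2 * (![u / v, 1] ⬝ᵥ A *ᵥ ![u / v, 1]) := by
  rw [dotProduct_mulVec_vec2, dotProduct_mulVec_vec2]
  field_simp

lemma tendsto_dotProduct_mulVec_vec2_div {α : Type*} {l : Filter α} {u v : α → ℝ}
    (A B : Matrix (Fin 2) (Fin 2) ℝ) (hB : B 1 1 ≠ 0)
    (huv : Tendsto (fun t => u t / v t) l (𝓝 0)) (hv : ∀ᶠ t in l, v t ≠ 0) :
    Tendsto (fun t => (![u t, v t] ⬝ᵥ A *ᵥ ![u t, v t]) / (![u t, v t] ⬝ᵥ B *ᵥ ![u t, v t]))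
      l (𝓝 (A 1 1 / B 1 1)) := by
  set q : Matrix (Fin 2) (Fin 2) ℝ → ℝ → ℝ := fun M r => ![r, 1] ⬝ᵥ M *ᵥ ![r, 1] with hq
  have hcont : ContinuousAt (fun r => q A r / q B r) 0 := by
    simp only [hq, dotProduct_mulVec_vec2]
    exact ContinuousAt.div (by fun_prop) (by fun_prop) (by simpa using hB)
  have hval : q A 0 / q B 0 = A 1 1 / B 1 1 := by simp [hq]
  rw [← hval]
  refine (hcont.tendsto.comp huv).congr' ?_
  filter_upwards [hv] with t ht
  simp only [Function.comp_apply, hq, dotProduct_mulVec_vec2_eq_sq_mul _ _ ht]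
  exact (mul_div_mul_left _ _ (pow_ne_zero 2 ht)).symm

end Matrix

section GPD

variable {γ σ x : ℝ}

lemma Dsigma_ne_zero (hσ : σ ≠ 0) (hx : x ≠ 0) (h : 0 < 1 + γ * x / σ) : Dsigma γ σ x ≠ 0 := by
  unfold Dsigma
  exact mul_ne_zero (by simp [hσ, hx]) (rpow_pos_of_pos h _).ne'

lemma Dgamma_div_Dsigma (hγ : γ ≠ 0) (hσ : σ ≠ 0) (hx : x ≠ 0) (h : 0 < 1 + γ * x / σ) :
    Dgamma γ σ x / Dsigma γ σ x
      = σ / γ * ((1 + γ * x / σ) * (log (1 + γ * x / σ) / (γ * x / σ)) - 1) := by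
  have hpow : (1 + γ * x / σ) ^ (-1 / γ : ℝ)
      = (1 + γ * x / σ) ^ (-1 / γ - 1 : ℝ) * (1 + γ * x / σ) := by
    rw [← rpow_add_one h.ne']
    norm_num
  have hc := (rpow_pos_of_pos h (-1 / γ - 1)).ne'
  unfold Dgamma Dsigma
  rw [hpow]
  generalize (1 + γ * x / σ) ^ (-1 / γ - 1 : ℝ) = p at hc ⊢
  have hσx : σ + γ * x ≠ 0 := by
    rw [show σ + γ * x = σ * (1 + γ * x / σ) by field_simp]
    exact mul_ne_zero hσ h.ne'
  field_simp

lemma tendsto_Dgamma_div_Dsigma (hγ : 0 < γ) (hσ : 0 < σ) :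
    Tendsto (fun x => Dgamma γ σ x / Dsigma γ σ x) (𝓝[>] 0) (𝓝 0) := by
  have hy : Tendsto (fun x => γ * x / σ) (𝓝[>] 0) (𝓝[≠] 0) := by
    refine tendsto_nhdsWithin_of_tendsto_nhds_of_eventually_within _ ?_ ?_
    · exact tendsto_nhdsWithin_of_tendsto_nhds (by simpa using
        ((continuous_const_mul γ).div_const σ).tendsto (0 : ℝ))
    · filter_upwards [self_mem_nhdsWithin] with x (hx : 0 < x)
      exact (by positivity : 0 < γ * x / σ).ne'
  have hlim : Tendsto (fun y => σ / γ * ((1 + y) * (log (1 + y) / y) - 1)) (𝓝[≠] 0)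
      (𝓝 (σ / γ * ((1 + 0) * 1 - 1))) :=
    ((tendsto_nhdsWithin_of_tendsto_nhds ((continuous_const_add 1).tendsto 0)).mul
      tendsto_log_one_add_div_self |>.sub_const 1).const_mul _
  rw [show σ / γ * ((1 + 0) * 1 - 1) = 0 by ring] at hlim
  refine (hlim.comp hy).congr' ?_
  filter_upwards [self_mem_nhdsWithin] with x (hx : 0 < x)
  exact (Dgamma_div_Dsigma hγ.ne' hσ.ne' hx.ne' (by positivity)).symm

end GPD

/-- as `x → 0⁺`, the relative efficiency `ς²(x)/ς²_{MLE}(x)` tends to a limit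
that depends only on γ, not on σ. -/
theorem relative_efficiency_limit_at_zero (γ : ℝ) (hγ : γ ∈ Set.Ioo (0 : ℝ) 1)
    (σ : ℝ) (hσ : 0 < σ) :
    Tendsto (fun x : ℝ => varMDE γ σ x / varMLE γ σ x) (𝓝[>] 0)
      (𝓝 (2 * (8 * γ ^ 5 - 84 * γ ^ 4 + 374 * γ ^ 3 - 843 * γ ^ 2 + 944 * γ - 423) /
        (3 * (γ - 3) ^ 2 * (γ + 1) * (2 * γ - 3) ^ 3))) := by
  obtain ⟨hγ0, hγ1⟩ := hγ
  have hMLE : SigmaMLE γ σ 1 1 ≠ 0 := by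
    simp only [SigmaMLE, of_apply, cons_val_one, cons_val_zero]
    positivity
  have hDsigma : ∀ᶠ x in 𝓝[>] (0 : ℝ), Dsigma γ σ x ≠ 0 := by
    filter_upwards [self_mem_nhdsWithin] with x (hx : 0 < x)
    exact Dsigma_ne_zero hσ.ne' hx.ne' (by positivity)
  have hval : SigmaMDE γ σ 1 1 / SigmaMLE γ σ 1 1
      = 2 * (8 * γ ^ 5 - 84 * γ ^ 4 + 374 * γ ^ 3 - 843 * γ ^ 2 + 944 * γ - 423) /
        (3 * (γ - 3) ^ 2 * (γ + 1) * (2 * γ - 3) ^ 3) := by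
    have h3 : γ - 3 ≠ 0 := by linarith
    have h23 : 2 * γ - 3 ≠ 0 := by linarith
    simp only [SigmaMDE, SigmaMLE, of_apply, cons_val_one, cons_val_zero]
    field_simp
    ring
  rw [← hval]
  unfold varMDE varMLE
  exact tendsto_dotProduct_mulVec_vec2_div (SigmaMDE γ σ) _ hMLE
    (tendsto_Dgamma_div_Dsigma hγ0 hσ) hDsigma
end

section
/- Fix γ ∈ (0,1) and σ > 0. Define for x > 0 the quadratic forms ς²(x) = ∇F(x)ᵀ Σ ∇F(x) and ς²_{MLE}(x) = ∇F(x)ᵀ Σ^{MLE} ∇F(x), where ∇F(x) = (D_γ(x), D_σ(x)) with D_γ(x) = −(1 + γx/σ)^{−1/γ}( log(1 + γx/σ)/γ² − (x/(γσ))/(1 + γx/σ) ) and D_σ(x) = −(x/σ²)(1 + γx/σ)^{−1/γ−1}. Then the ratio ς²(x)/ς²_{MLE}(x) tends, as x → ∞, to −4(γ−2)⁴( γ(γ(2γ(4γ² − 58γ + 243) − 683) + 452) − 639 ) / ( 3(3−2γ)³(γ−6)²(γ−3)²(γ+1)² ); in particular this limit does not depend on σ. -/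
/-!
Dividing both quadratic forms by `D_γ(x)²` turns the ratio into a quotient of two quadratic
polynomials in `u = D_σ(x) / D_γ(x)`, so it tends to `Σ₁₁ / Σ^{MLE}₁₁` as soon as `u → 0`.
With `t = 1 + γx/σ` one has `u = (γ/σ) (1 - t⁻¹) / (log t - 1 + t⁻¹)`, which tends to `0`
because the logarithm is unbounded.
-/

open Real Matrix Filter Topology

lemma vec2_dotProduct_mulVec_vec2_eq_sq_mul {K : Type*} [Field K] (M : Matrix (Fin 2) (Fin 2) K)
    {a : K} (b : K) (ha : a ≠ 0) :
    ![a, b] ⬝ᵥ M *ᵥ ![a, b] = a ^ 2 * (![1, b / a] ⬝ᵥ M *ᵥ ![1, b / a]) := by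
  have hscale : ![a, b] = a • ![1, b / a] := by
    ext i; fin_cases i <;> simp [mul_div_cancel₀ _ ha]
  rw [hscale, mulVec_smul, dotProduct_smul, smul_dotProduct, smul_eq_mul, smul_eq_mul, ← mul_assoc,
    ← sq]

lemma tendsto_quadForm_div_quadForm {α : Type*} {l : Filter α} {f g : α → ℝ}
    (M N : Matrix (Fin 2) (Fin 2) ℝ) (hN : N 0 0 ≠ 0) (hf : ∀ᶠ x in l, f x ≠ 0)
    (hgf : Tendsto (fun x => g x / f x) l (𝓝 0)) :
    Tendsto (fun x => (![f x, g x] ⬝ᵥ M *ᵥ ![f x, g x]) / (![f x, g x] ⬝ᵥ N *ᵥ ![f x, g x]))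
      l (𝓝 (M 0 0 / N 0 0)) := by
  have hq : ∀ A : Matrix (Fin 2) (Fin 2) ℝ,
      Tendsto (fun x => ![1, g x / f x] ⬝ᵥ A *ᵥ ![1, g x / f x]) l (𝓝 (A 0 0)) := by
    intro A
    have hcont : Continuous fun s : ℝ => ![1, s] ⬝ᵥ A *ᵥ ![1, s] := by
      simp only [dotProduct, mulVec, Fin.sum_univ_two]
      fun_prop
    have hzero : ![1, 0] ⬝ᵥ A *ᵥ ![1, 0] = A 0 0 := by simp [dotProduct, mulVec]
    exact hzero ▸ (hcont.tendsto 0).comp hgf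
  refine ((hq M).div (hq N) hN).congr' ?_
  filter_upwards [hf] with x hx
  rw [Pi.div_apply, vec2_dotProduct_mulVec_vec2_eq_sq_mul M _ hx,
    vec2_dotProduct_mulVec_vec2_eq_sq_mul N _ hx, mul_div_mul_left _ _ (pow_ne_zero 2 hx)]

section GeneralizedPareto

variable {γ σ x : ℝ}

lemma Dgamma_eq (hγ : γ ≠ 0) (hσ : σ ≠ 0) (ht : 1 + γ * x / σ ≠ 0) :
    Dgamma γ σ x = -((1 + γ * x / σ) ^ (-1 / γ : ℝ) / γ ^ 2) *
      (log (1 + γ * x / σ) - 1 + (1 + γ * x / σ)⁻¹) := by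
  have hx : x / (γ * σ) = (1 + γ * x / σ - 1) / γ ^ 2 := by
    field_simp
    ring
  rw [Dgamma, hx]
  generalize 1 + γ * x / σ = t at ht ⊢
  field_simp
  ring

lemma Dsigma_eq (hγ : γ ≠ 0) (hσ : σ ≠ 0) (ht : 0 < 1 + γ * x / σ) :
    Dsigma γ σ x = -((1 + γ * x / σ) ^ (-1 / γ : ℝ) / γ ^ 2) *
      (γ / σ * (1 - (1 + γ * x / σ)⁻¹)) := by
  have hx : x / σ ^ 2 = (1 + γ * x / σ - 1) / (γ * σ) := by
    field_simp
    ring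
  rw [Dsigma, hx, rpow_sub ht, rpow_one]
  generalize 1 + γ * x / σ = t at ht ⊢
  field_simp

lemma tendsto_log_sub_one_add_inv_atTop :
    Tendsto (fun t : ℝ => log t - 1 + t⁻¹) atTop atTop :=
  (tendsto_atTop_add_const_right _ (-1) tendsto_log_atTop).atTop_add tendsto_inv_atTop_zero

lemma tendsto_one_add_mul_div_atTop (hγ : 0 < γ) (hσ : 0 < σ) :
    Tendsto (fun x : ℝ => 1 + γ * x / σ) atTop atTop :=
  tendsto_atTop_add_const_left _ 1 <|
    (tendsto_id.const_mul_atTop (div_pos hγ hσ)).congr fun x => div_mul_eq_mul_div γ σ x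

lemma eventually_Dgamma_ne_zero (hγ : 0 < γ) (hσ : 0 < σ) :
    ∀ᶠ x in atTop, Dgamma γ σ x ≠ 0 := by
  filter_upwards [eventually_gt_atTop 0, (tendsto_log_sub_one_add_inv_atTop.comp
    (tendsto_one_add_mul_div_atTop hγ hσ)).eventually_gt_atTop 0] with x hx hlog
  have ht : 0 < 1 + γ * x / σ := by positivity
  rw [Dgamma_eq hγ.ne' hσ.ne' ht.ne']
  exact mul_ne_zero (neg_ne_zero.2 (by positivity)) hlog.ne'

lemma tendsto_Dsigma_div_Dgamma_atTop (hγ : 0 < γ) (hσ : 0 < σ) :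
    Tendsto (fun x => Dsigma γ σ x / Dgamma γ σ x) atTop (𝓝 0) := by
  have hlim : Tendsto (fun t : ℝ => γ / σ * (1 - t⁻¹) / (log t - 1 + t⁻¹)) atTop (𝓝 0) :=
    ((tendsto_const_nhds.sub tendsto_inv_atTop_zero).const_mul (γ / σ)).div_atTop
      tendsto_log_sub_one_add_inv_atTop
  refine (hlim.comp (tendsto_one_add_mul_div_atTop hγ hσ)).congr' ?_
  filter_upwards [eventually_gt_atTop 0] with x hx
  have ht : 0 < 1 + γ * x / σ := by positivity
  rw [Function.comp_apply, Dsigma_eq hγ.ne' hσ.ne' ht, Dgamma_eq hγ.ne' hσ.ne' ht.ne',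
    mul_div_mul_left _ _ (neg_ne_zero.2 (by positivity))]

end GeneralizedPareto

/-- as `x → ∞`, the relative efficiency `ς²(x)/ς²_{MLE}(x)` tends to a limit
that depends only on γ, not on σ. -/
theorem relative_efficiency_limit_at_top (γ : ℝ) (hγ : γ ∈ Set.Ioo (0 : ℝ) 1)
    (σ : ℝ) (hσ : 0 < σ) :
    Tendsto (fun x : ℝ => varMDE γ σ x / varMLE γ σ x) atTop
      (𝓝 (-4 * (γ - 2) ^ 4 *
          (γ * (γ * (2 * γ * (4 * γ ^ 2 - 58 * γ + 243) - 683) + 452) - 639) /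
        (3 * (3 - 2 * γ) ^ 3 * (γ - 6) ^ 2 * (γ - 3) ^ 2 * (γ + 1) ^ 2))) := by
  obtain ⟨hγ, -⟩ := hγ
  have h : Tendsto (fun x : ℝ => varMDE γ σ x / varMLE γ σ x) atTop
      (𝓝 (SigmaMDE γ σ 0 0 / SigmaMLE γ σ 0 0)) :=
    tendsto_quadForm_div_quadForm _ _ (show (γ + 1) ^ 2 ≠ 0 by positivity)
      (eventually_Dgamma_ne_zero hγ hσ) (tendsto_Dsigma_div_Dgamma_atTop hγ hσ)
  convert h using 2
  simp only [SigmaMDE, SigmaMLE, of_apply, cons_val', cons_val_zero, empty_val', cons_val_fin_one]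
  -- the two sides differ by the sign of `(3 - 2γ)³ = -(2γ - 3)³` in numerator and denominator
  rw [div_div, ← neg_div_neg_eq]
  congr 1 <;> ring
end
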